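/- Let G=(V,E) be a finite directed graph with initial vertex v_init ∈ V, and let M_G be the MDP constructed from (G, v_init) as in the Hamiltonian-path reduction. Then every memoryless deterministic scheduler σ of M_G satisfies Pr^σ_{s₀}(◇{s_b}) = 1/2^{|V|}. -/
import Mathlib


open scoped BigOperators Classical
open Filter

/-- A finite history: an initial state together with a list of (action, next-state) steps. -/
abbrev Hist (S A : Type*) : Type _ := S × List (A × S)

/-- The last state of a history. -/
def Hist.last {S A : Type*} (π : Hist S A) : S :=
  (π.2.getLast?).elim π.1 Prod.snd

/-- A Markov decision process with finite state space `S` and finite action space `A`: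
`P s a s'` is the transition probability, each state has at least one enabled action
(an action whose outgoing probabilities sum to `1`), and the outgoing probabilities
of a non-enabled action sum to `0`. -/
structure MDP (S A : Type*) [Fintype S] [Fintype A] where
  P : S → A → S → ℝ
  nonneg : ∀ s a s', 0 ≤ P s a s'
  le_one : ∀ s a s', P s a s' ≤ 1
  sum_cases : ∀ s a, (∑ s', P s a s') = 1 ∨ (∑ s', P s a s') = 0
  exists_enabled : ∀ s, ∃ a, (∑ s', P s a s') = 1

namespace MDP

variable {S A : Type*} [Fintype S] [Fintype A]

/-- Action `a` is enabled in state `s`. -/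
def enabled (M : MDP S A) (s : S) (a : A) : Prop := (∑ s', M.P s a s') = 1

/-- A state is absorbing if every enabled action loops on it with probability 1. -/
def Absorbing (M : MDP S A) (s : S) : Prop := ∀ a, M.enabled s a → M.P s a s = 1

end MDP

/-- A (history-dependent, randomized) scheduler for `M`: it assigns to every finite
history a probability distribution over the actions enabled at its last state. -/
structure Scheduler {S A : Type*} [Fintype S] [Fintype A] (M : MDP S A) where
  choice : Hist S A → A → ℝ
  nonneg : ∀ π a, 0 ≤ choice π a
  sum_one : ∀ π, (∑ a, choice π a) = 1
  supp : ∀ π a, ¬ M.enabled (Hist.last π) a → choice π a = 0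

namespace Scheduler

variable {S A : Type*} [Fintype S] [Fintype A] {M : MDP S A}

/-- A scheduler is memoryless if its choice only depends on the last state of the history. -/
def Memoryless (σ : Scheduler M) : Prop :=
  ∀ π π' : Hist S A, Hist.last π = Hist.last π' → σ.choice π = σ.choice π'

/-- A scheduler is deterministic if all its choice probabilities are 0 or 1. -/
def Deterministic (σ : Scheduler M) : Prop :=
  ∀ π a, σ.choice π a = 0 ∨ σ.choice π a = 1

/-- Memoryless deterministic (MD) schedulers. -/
def MD (σ : Scheduler M) : Prop := σ.Memoryless ∧ σ.Deterministic

end Scheduler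

/-- Probability of reaching the target set `T` within `n` steps, starting from history `π`,
under scheduler `σ`. -/
noncomputable def reachN {S A : Type*} [Fintype S] [Fintype A] (M : MDP S A)
    (σ : Scheduler M) (T : Set S) : ℕ → Hist S A → ℝ
  | 0, π => if Hist.last π ∈ T then 1 else 0
  | n + 1, π =>
      if Hist.last π ∈ T then 1
      else ∑ a, σ.choice π a * ∑ s', M.P (Hist.last π) a s' *
        reachN M σ T n (π.1, π.2 ++ [(a, s')])

/-- `Pr M σ s T` is the probability of eventually reaching `T` from state `s` under
scheduler `σ`: the supremum of the step-bounded reachability probabilities. -/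
noncomputable def Pr {S A : Type*} [Fintype S] [Fintype A] (M : MDP S A)
    (σ : Scheduler M) (s : S) (T : Set S) : ℝ :=
  ⨆ n : ℕ, reachN M σ T n (s, [])

/-- States of the Hamiltonian-path reduction MDP: the vertices `V`, the chain states
`s₀, s₁, …, s_{|V|−1}` (encoded as `Fin (card V)`), and the three extra states
`s_⊥, s_a, s_b` (encoded as `Fin 3`: `0 = s_⊥`, `1 = s_a`, `2 = s_b`). -/
abbrev HSt (V : Type*) [Fintype V] : Type _ := V ⊕ (Fin (Fintype.card V) ⊕ Fin 3)

/-- Actions of the Hamiltonian-path reduction MDP: `none` is `τ` and `some (v, v')`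
is the action associated with the edge `(v, v')`. -/
abbrev HAct (V : Type*) : Type _ := Option (V × V)

/-- The initial state `s₀` (the first chain state). -/
def hs0 (V : Type*) [Fintype V] [Nonempty V] : HSt V :=
  Sum.inr (Sum.inl ⟨0, Fintype.card_pos⟩)

/-- The absorbing state `s_⊥`. -/
def hsBot (V : Type*) [Fintype V] : HSt V := Sum.inr (Sum.inr 0)

/-- The absorbing state `s_a`. -/
def hsA (V : Type*) [Fintype V] : HSt V := Sum.inr (Sum.inr 1)

/-- The absorbing state `s_b`. -/
def hsB (V : Type*) [Fintype V] : HSt V := Sum.inr (Sum.inr 2)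

/-- The transition function of the Hamiltonian-path reduction MDP for a directed graph
`(V, E)` with initial vertex `vinit`:
`P(s₀,τ,vinit) = P(s₀,τ,s₁) = 1/2`; `P(sᵢ,τ,s_{i+1}) = P(sᵢ,τ,s_⊥) = 1/2` for
`1 ≤ i ≤ |V|−2`; `P(s_{|V|−1},τ,s_b) = P(s_{|V|−1},τ,s_⊥) = 1/2`; for `(v,v') ∈ E`,
`P(v,(v,v'),v') = P(v,(v,v'),s_⊥) = 1/2`; `P(v,τ,s_a) = 1`; `s_⊥, s_a, s_b` absorbing. -/
noncomputable def hamP {V : Type*} [Fintype V] [DecidableEq V]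
    (E : Set (V × V)) (vinit : V) : HSt V → HAct V → HSt V → ℝ := fun x act y =>
  match x, act with
  | Sum.inl v, none => if y = hsA V then 1 else 0
  | Sum.inl v, some (u, u') =>
      if u = v ∧ (u, u') ∈ E then
        (if y = Sum.inl u' then (1 : ℝ) / 2 else 0) +
          (if y = hsBot V then (1 : ℝ) / 2 else 0)
      else 0
  | Sum.inr (Sum.inl i), none =>
      (if y = (if (i : ℕ) = 0 then Sum.inl vinit else hsBot V) then (1 : ℝ) / 2 else 0) +
        (if h : (i : ℕ) + 1 < Fintype.card V then
            (if y = Sum.inr (Sum.inl ⟨(i : ℕ) + 1, h⟩) then (1 : ℝ) / 2 else 0)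
          else (if y = hsB V then (1 : ℝ) / 2 else 0))
  | Sum.inr (Sum.inl _), some _ => 0
  | Sum.inr (Sum.inr e), none => if y = Sum.inr (Sum.inr e) then 1 else 0
  | Sum.inr (Sum.inr _), some _ => 0

/-- `l` is a Hamiltonian path of the graph `(V, E)` starting at `vinit`: it lists every
vertex exactly once, starts at `vinit`, and follows edges of `E`. -/
def IsHamPath {V : Type*} [Fintype V] (E : Set (V × V)) (vinit : V) (l : List V) : Prop :=
  l.Nodup ∧ l.length = Fintype.card V ∧ l.head? = some vinit ∧
    l.Chain' (fun u u' => (u, u') ∈ E)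

section Aux

lemma hist_last_concat {S A : Type*} (π : Hist S A) (a : A) (s' : S) :
    Hist.last ((π.1, π.2 ++ [(a, s')]) : Hist S A) = s' := by
  simp [Hist.last]

lemma reachN_of_mem {S A : Type*} [Fintype S] [Fintype A] (M : MDP S A)
    (σ : Scheduler M) (T : Set S) (n : ℕ) (π : Hist S A) (h : Hist.last π ∈ T) :
    reachN M σ T n π = 1 := by
  cases n <;> simp [reachN, h]

lemma sum_ite_half_mul {β : Type*} [Fintype β] [DecidableEq β] (A : β) (r : β → ℝ) :
    ∑ y, (if y = A then (1 : ℝ)/2 else 0) * r y = 1/2 * r A := by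
  simp only [ite_mul, zero_mul]
  rw [Finset.sum_ite_eq' Finset.univ A]
  simp

variable {V : Type*} [Fintype V] [DecidableEq V] [Nonempty V]

/-- States from which `s_b` is unreachable. -/
def HBad : HSt V → Prop
  | Sum.inl _ => True
  | Sum.inr (Sum.inl _) => False
  | Sum.inr (Sum.inr e) => e ≠ 2

lemma HBad.ne_hsB {x : HSt V} (hx : HBad x) : x ∉ ({hsB V} : Set (HSt V)) := by
  rcases x with v | (i | e)
  · simp [hsB]
  · exact absurd hx not_false
  · simp only [Set.mem_singleton_iff, hsB]
    intro h
    exact hx (by injection h with h'; injection h')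

lemma hamP_bad_succ (E : Set (V × V)) (vinit : V) (x : HSt V) (hx : HBad x)
    (a : HAct V) (y : HSt V) (h : hamP E vinit x a y ≠ 0) : HBad y := by
  rcases x with v | (i | e)
  · rcases a with _ | ⟨u, u'⟩
    · simp only [hamP] at h
      split_ifs at h with hy
      · subst hy; show (1 : Fin 3) ≠ 2; decide
      · exact absurd rfl h
    · simp only [hamP] at h
      by_cases hy1 : y = Sum.inl u'
      · subst hy1; trivial
      · by_cases hy2 : y = hsBot V
        · subst hy2; show (0 : Fin 3) ≠ 2; decide
        · simp [hy1, hy2] at h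
  · exact absurd hx not_false
  · rcases a with _ | b
    · simp only [hamP] at h
      split_ifs at h with hy
      · subst hy; exact hx
      · exact absurd rfl h
    · simp only [hamP] at h; exact absurd rfl h

lemma reachN_bad (E : Set (V × V)) (vinit : V)
    (M : MDP (HSt V) (HAct V)) (hM : M.P = hamP E vinit) (σ : Scheduler M) :
    ∀ (n : ℕ) (π : Hist (HSt V) (HAct V)), HBad (Hist.last π) →
      reachN M σ ({hsB V} : Set (HSt V)) n π = 0 := by
  intro n
  induction n with
  | zero =>
      intro π hπ
      simp only [reachN, if_neg hπ.ne_hsB]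
  | succ n ih =>
      intro π hπ
      simp only [reachN, if_neg hπ.ne_hsB]
      apply Finset.sum_eq_zero
      intro a _
      rw [mul_eq_zero]
      right
      apply Finset.sum_eq_zero
      intro s' _
      by_cases hp : M.P (Hist.last π) a s' = 0
      · rw [hp, zero_mul]
      · rw [mul_eq_zero]; right
        apply ih
        rw [hist_last_concat]
        exact hamP_bad_succ E vinit _ hπ a s' (by rwa [hM] at hp)

lemma chain_not_mem (i : Fin (Fintype.card V)) :
    (Sum.inr (Sum.inl i) : HSt V) ∉ ({hsB V} : Set (HSt V)) := by
  simp [hsB]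

lemma choice_facts (E : Set (V × V)) (vinit : V)
    (M : MDP (HSt V) (HAct V)) (hM : M.P = hamP E vinit) (σ : Scheduler M)
    (π : Hist (HSt V) (HAct V)) (i : Fin (Fintype.card V))
    (hπ : Hist.last π = Sum.inr (Sum.inl i)) :
    σ.choice π none = 1 ∧ ∀ b, σ.choice π (some b) = 0 := by
  have hz : ∀ b, σ.choice π (some b) = 0 := by
    intro b
    apply σ.supp
    rw [hπ]
    simp [MDP.enabled, hM, hamP]
  refine ⟨?_, hz⟩
  have h1 := σ.sum_one π
  rw [Fintype.sum_option] at h1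
  simpa [hz] using h1

lemma chain_val (E : Set (V × V)) (vinit : V)
    (M : MDP (HSt V) (HAct V)) (hM : M.P = hamP E vinit) (σ : Scheduler M) :
    ∀ (n : ℕ) (i : Fin (Fintype.card V)) (π : Hist (HSt V) (HAct V)),
      Hist.last π = Sum.inr (Sum.inl i) →
      reachN M σ ({hsB V} : Set (HSt V)) n π =
        if Fintype.card V - (i : ℕ) ≤ n then ((1 : ℝ)/2) ^ (Fintype.card V - (i : ℕ)) else 0 := by
  intro n
  induction n with
  | zero =>
      intro i π hπ
      have : ¬ (Fintype.card V - (i : ℕ) ≤ 0) := by have := i.2; omega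
      rw [if_neg this]
      simp only [reachN, hπ, if_neg (chain_not_mem i)]
  | succ n ih =>
      intro i π hπ
      obtain ⟨hnone, hsome⟩ := choice_facts E vinit M hM σ π i hπ
      simp only [reachN, hπ, if_neg (chain_not_mem i)]
      rw [Fintype.sum_option]
      have hzero : ∑ b : V × V, σ.choice π (some b) *
          (∑ s', M.P (Sum.inr (Sum.inl i)) (some b) s' *
            reachN M σ ({hsB V} : Set (HSt V)) n (π.1, π.2 ++ [(some b, s')])) = 0 := by
        apply Finset.sum_eq_zero
        intro b _
        rw [hsome b, zero_mul]
      rw [hzero, add_zero, hnone, one_mul, hM]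
      set r : HSt V → ℝ :=
        fun y => reachN M σ ({hsB V} : Set (HSt V)) n (π.1, π.2 ++ [(none, y)]) with hr
      have hbadA : r (if (i : ℕ) = 0 then Sum.inl vinit else hsBot V) = 0 := by
        apply reachN_bad E vinit M hM σ
        rw [hist_last_concat]
        split_ifs
        · trivial
        · show (0 : Fin 3) ≠ 2; decide
      by_cases hi : (i : ℕ) + 1 < Fintype.card V
      · have hsum : ∑ y, hamP E vinit (Sum.inr (Sum.inl i)) none y * r y =
            1/2 * r (if (i : ℕ) = 0 then Sum.inl vinit else hsBot V) +
            1/2 * r (Sum.inr (Sum.inl ⟨(i : ℕ) + 1, hi⟩)) := by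
          simp only [hamP, dif_pos hi, add_mul, Finset.sum_add_distrib,
            sum_ite_half_mul]
        rw [hsum, hbadA, mul_zero, zero_add]
        have hnext : r (Sum.inr (Sum.inl ⟨(i : ℕ) + 1, hi⟩)) =
            if Fintype.card V - ((i : ℕ) + 1) ≤ n then
              ((1 : ℝ)/2) ^ (Fintype.card V - ((i : ℕ) + 1)) else 0 := by
          apply ih ⟨(i : ℕ) + 1, hi⟩
          rw [hist_last_concat]
        rw [hnext]
        have hcond : (Fintype.card V - ((i : ℕ) + 1) ≤ n) ↔
            (Fintype.card V - (i : ℕ) ≤ n + 1) := by omega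
        by_cases hc : Fintype.card V - ((i : ℕ) + 1) ≤ n
        · rw [if_pos hc, if_pos (hcond.mp hc)]
          have : Fintype.card V - (i : ℕ) = (Fintype.card V - ((i : ℕ) + 1)) + 1 := by omega
          rw [this, pow_succ]
          ring
        · rw [if_neg hc, if_neg (fun h => hc (hcond.mpr h)), mul_zero]
      · have hsum : ∑ y, hamP E vinit (Sum.inr (Sum.inl i)) none y * r y =
            1/2 * r (if (i : ℕ) = 0 then Sum.inl vinit else hsBot V) +
            1/2 * r (hsB V) := by
          simp only [hamP, dif_neg hi, add_mul, Finset.sum_add_distrib,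
            sum_ite_half_mul]
        rw [hsum, hbadA, mul_zero, zero_add]
        have hb : r (hsB V) = 1 := by
          apply reachN_of_mem
          rw [hist_last_concat]
          exact rfl
        rw [hb, mul_one]
        have h1 : Fintype.card V - (i : ℕ) = 1 := by have := i.2; omega
        rw [h1, if_pos (by omega), pow_one]

end Aux

/-- In the Hamiltonian-path reduction MDP, every memoryless
deterministic scheduler reaches `s_b` from `s₀` with probability exactly `1/2^{|V|}`. -/
theorem MD_prob_sb_eq
    {V : Type*} [Fintype V] [DecidableEq V] [Nonempty V]
    (E : Set (V × V)) (vinit : V)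
    (M : MDP (HSt V) (HAct V)) (hM : M.P = hamP E vinit)
    (σ : Scheduler M) (hσ : σ.MD) :
    Pr M σ (hs0 V) ({hsB V} : Set (HSt V)) = 1 / 2 ^ (Fintype.card V) := by
  have hlast : Hist.last ((hs0 V, []) : Hist (HSt V) (HAct V)) = hs0 V := rfl
  have hval : ∀ n : ℕ, reachN M σ ({hsB V} : Set (HSt V)) n ((hs0 V, []) : Hist (HSt V) (HAct V)) =
      if Fintype.card V ≤ n then ((1 : ℝ)/2) ^ (Fintype.card V) else 0 := by
    intro n
    have := chain_val E vinit M hM σ n ⟨0, Fintype.card_pos⟩ (hs0 V, []) hlast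
    simpa using this
  have hpow : ((1 : ℝ)/2) ^ (Fintype.card V) = 1 / 2 ^ (Fintype.card V) := by
    rw [div_pow, one_pow]
  rw [Pr]
  rw [iSup_congr hval]
  apply le_antisymm
  · apply ciSup_le
    intro n
    split_ifs
    · exact le_of_eq hpow
    · positivity
  · have hbdd : BddAbove (Set.range fun n : ℕ =>
        if Fintype.card V ≤ n then ((1 : ℝ)/2) ^ (Fintype.card V) else 0) := by
      refine ⟨((1 : ℝ)/2) ^ (Fintype.card V), ?_⟩
      rintro x ⟨n, rfl⟩
      dsimp only
      split_ifs
      · exact le_refl _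
      · positivity
    calc (1 : ℝ) / 2 ^ (Fintype.card V)
        = if Fintype.card V ≤ Fintype.card V then ((1 : ℝ)/2) ^ (Fintype.card V) else 0 := by
          rw [if_pos le_rfl, hpow]
      _ ≤ _ := le_ciSup hbdd (Fintype.card V)
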